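/- Let u: Ω_h → ℝ³ satisfy u = 0 on ∂Ω_h, and let v: ℝ³ → ℝ³ be the piecewise-constant step function v(x) = u(y) for x in the half-open cube C_h⁺(y) = [y₁,y₁+h)×[y₂,y₂+h)×[y₃,y₃+h), y ∈ Ω_h, and v = 0 elsewhere. Then there exists a Lipschitz continuous function w: Ω → ℝ³ with compact support such that ‖w - v‖_{L²(Ω)} ≤ K h ∑_{j=1}³ ‖D_j⁺u‖_{Ω_h} and ‖∂_{x_i}w‖_{L²(Ω)} ≤ K ∑_{j=1}³ ‖D_j⁺u‖_{Ω_h} for i = 1,2,3, where K is independent of u and h. -/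

import Mathlib

/-!
The interpolant is `w = ∑_{y ∈ Ω_h} Φ_y u(y)` with tensor-product bumps
`Φ_y(x) = ∏ₖ ψ(xₖ/h - yₖ)`, `ψ(t) = g(t+1) - g(t)` for a smooth step `g`. This C¹ variant of the
trilinear hat functions makes `w` continuously differentiable with compact support, hence
Lipschitz. On the cell of `z` the translates of `ψ` sum to one and those of `ψ'` to zero, so
`w - u(z)` and `h ∂ᵢw` are bounded combinations of the differences `u(z+ε) - u(z)` over the
corners `ε` of the cell, each a sum of three forward differences. By Cauchy–Schwarz the squared
L² norms over the cells add up to `h²`, resp. `1`, times `∑_j ‖D_j⁺u‖²`; the boundary condition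
makes the forward differences vanish off `Ω_h`. Finally `w` lives in the `h`-neighbourhood of
`Ω_h`, which lies in `Ω`.
-/

open Finset MeasureTheory
open scoped NNReal

abbrev Pt := Fin 3 → ℤ

def ee (i : Fin 3) : Pt := fun j => if j = i then 1 else 0

open scoped Classical in
noncomputable def bdry (Ωh : Finset Pt) : Finset Pt :=
  Ωh.filter (fun x => ∃ i : Fin 3, x + ee i ∉ Ωh ∨ x - ee i ∉ Ωh)

/-- Discrete L² norm of the forward difference `‖D_j⁺u‖_{Ω_h}` (with `0`-extension). -/
noncomputable def DpNorm (h : ℝ) (Ωh : Finset Pt) (u : Pt → Fin 3 → ℝ) (j : Fin 3) : ℝ :=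
  Real.sqrt (∑ z ∈ Ωh, (∑ i, ((u (z + ee j) i - u z i) / h) ^ 2) * h ^ 3)

open Real
open scoped fwdDiff ENNReal Pointwise

namespace LipschitzInterpolation

noncomputable section

structure IsStep (F : ℝ → ℝ) (c : ℝ) : Prop where
  eq_zero_of_nonpos : ∀ t ≤ 0, F t = 0
  eq_of_one_le : ∀ t, 1 ≤ t → F t = c

def bump (F : ℝ → ℝ) (t : ℝ) : ℝ := F (t + 1) - F t

section Step

variable {F : ℝ → ℝ} {c a t M : ℝ}

namespace IsStep

lemma bump_eq_zero (hF : IsStep F c) (ht : t ≤ -1 ∨ 1 ≤ t) : bump F t = 0 := by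
  rcases ht with ht | ht
  · rw [bump, hF.eq_zero_of_nonpos t (by linarith), hF.eq_zero_of_nonpos _ (by linarith), sub_zero]
  · rw [bump, hF.eq_of_one_le t ht, hF.eq_of_one_le _ (by linarith), sub_self]

lemma abs_lt_one_of_bump_ne_zero (hF : IsStep F c) (ht : bump F t ≠ 0) : |t| < 1 := by
  by_contra hge
  exact ht (hF.bump_eq_zero (le_abs'.1 (not_lt.1 hge)))

lemma bump_add_bump_sub_one (hF : IsStep F c) (h0 : 0 ≤ a) (h1 : a ≤ 1) :
    bump F a + bump F (a - 1) = c := by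
  rw [bump, bump, sub_add_cancel, hF.eq_of_one_le _ (by linarith),
    hF.eq_zero_of_nonpos (a - 1) (by linarith)]
  ring

/-- The derivative of a step vanishes also at `0` and `1`, where it is a one-sided derivative of a
constant. -/
lemma deriv (hF : IsStep F c) (hd : Differentiable ℝ F) : IsStep (deriv F) 0 where
  eq_zero_of_nonpos t ht := by
    have hconst : HasDerivWithinAt F 0 (Set.Iic 0) t :=
      (hasDerivWithinAt_const t _ 0).congr (fun s hs => hF.eq_zero_of_nonpos s hs)
        (hF.eq_zero_of_nonpos t ht)
    exact (uniqueDiffOn_Iic 0 t ht).eq_deriv _ (hd t).hasDerivAt.hasDerivWithinAt hconst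
  eq_of_one_le t ht := by
    have hconst : HasDerivWithinAt F 0 (Set.Ici 1) t :=
      (hasDerivWithinAt_const t _ c).congr (fun s hs => hF.eq_of_one_le s hs)
        (hF.eq_of_one_le t ht)
    exact (uniqueDiffOn_Ici 1 t ht).eq_deriv _ (hd t).hasDerivAt.hasDerivWithinAt hconst

end IsStep

lemma hasDerivAt_bump (hd : Differentiable ℝ F) (t : ℝ) :
    HasDerivAt (bump F) (bump (deriv F) t) t :=
  ((hd (t + 1)).hasDerivAt.comp_add_const t 1).sub (hd t).hasDerivAt

lemma contDiff_bump {n : WithTop ℕ∞} (hF : ContDiff ℝ n F) : ContDiff ℝ n (bump F) :=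
  (hF.comp (contDiff_id.add contDiff_const)).sub hF

lemma abs_bump_le (hM : ∀ t, |F t| ≤ M) (t : ℝ) : |bump F t| ≤ 2 * M :=
  (abs_sub _ _).trans (by linarith [hM (t + 1), hM t])

end Step

lemma isStep_smoothTransition : IsStep smoothTransition 1 :=
  ⟨fun _ => smoothTransition.zero_of_nonpos, fun _ => smoothTransition.one_of_one_le⟩

lemma differentiable_smoothTransition : Differentiable ℝ smoothTransition :=
  smoothTransition.contDiff.differentiable (n := 1) one_ne_zero

lemma exists_bound_smoothTransition :
    ∃ M > 0, ∀ t, |smoothTransition t| ≤ M ∧ |deriv smoothTransition t| ≤ M := by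
  have hstep := isStep_smoothTransition.deriv differentiable_smoothTransition
  have hsupp : HasCompactSupport (deriv smoothTransition) :=
    HasCompactSupport.intro isCompact_Icc fun t ht => by
      simp only [Set.mem_Icc, not_and_or, not_le] at ht
      rcases ht with ht | ht
      · exact hstep.eq_zero_of_nonpos t ht.le
      · exact hstep.eq_of_one_le t ht.le
  obtain ⟨C, hC⟩ := hsupp.exists_bound_of_continuous
    (smoothTransition.contDiff.continuous_deriv (n := 1) le_rfl)
  refine ⟨max C 1, by positivity, fun t => ⟨?_, (hC t).trans (le_max_left _ _)⟩⟩
  rw [abs_of_nonneg (smoothTransition.nonneg t)]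
  exact (smoothTransition.le_one t).trans (le_max_right _ _)

section Cells

variable {ι : Type*} {h : ℝ} {z : ι → ℤ} {x : ι → ℝ}

def cell (h : ℝ) (z : ι → ℤ) : Set (ι → ℝ) := {x | ∀ i, h * z i ≤ x i ∧ x i < h * z i + h}

def zfloor (h : ℝ) (x : ι → ℝ) : ι → ℤ := fun i => ⌊x i / h⌋

lemma mem_cell_iff_zfloor_eq (hh : 0 < h) : x ∈ cell h z ↔ zfloor h x = z := by
  simp only [cell, Set.mem_ofPred_eq, funext_iff, zfloor, Int.floor_eq_iff, le_div_iff₀ hh,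
    div_lt_iff₀ hh, add_mul, one_mul, mul_comm h]

lemma mem_cell_zfloor (hh : 0 < h) (x : ι → ℝ) : x ∈ cell h (zfloor h x) :=
  (mem_cell_iff_zfloor_eq hh).2 rfl

lemma div_sub_zfloor_mem_Ico (x : ι → ℝ) (i : ι) : x i / h - zfloor h x i ∈ Set.Ico 0 1 :=
  ⟨sub_nonneg.2 (Int.floor_le _), sub_lt_iff_lt_add'.2 (Int.lt_floor_add_one _)⟩

lemma cell_eq_pi : cell h z = Set.univ.pi fun i => Set.Ico (h * z i) (h * z i + h) := by
  ext x
  simp [cell, Set.mem_pi]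

variable [Fintype ι]

lemma measurableSet_cell : MeasurableSet (cell h z) := by
  rw [cell_eq_pi]
  exact .univ_pi fun _ => measurableSet_Ico

lemma volume_cell (hh : 0 < h) : volume (cell h z) = ENNReal.ofReal (h ^ Fintype.card ι) := by
  simp [cell_eq_pi, volume_pi_pi, Real.volume_Ico, ENNReal.ofReal_pow hh.le]

end Cells

lemma eLpNorm_two_le_of_lintegral_le {α E : Type*} [MeasurableSpace α] [NormedAddCommGroup E]
    {μ : Measure α} {F : α → E} {c : ℝ≥0∞} (hF : ∫⁻ x, ‖F x‖ₑ ^ 2 ∂μ ≤ c ^ 2) :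
    eLpNorm F 2 μ ≤ c := by
  have hsq : eLpNorm F 2 μ ^ 2 = ∫⁻ x, ‖F x‖ₑ ^ 2 ∂μ := by
    simpa using eLpNorm_nnreal_pow_eq_lintegral (f := F) (μ := μ) (p := 2) two_ne_zero
  exact (ENNReal.pow_le_pow_left_iff two_ne_zero).1 (hsq ▸ hF)

section CellwiseBound

variable {ι E : Type*} [NormedAddCommGroup E] {h : ℝ} {F : (ι → ℝ) → E}
  {b : (ι → ℤ) → ℝ} {S : Finset (ι → ℤ)}

lemma enorm_sq_le_sum_indicator_cell (hh : 0 < h) (hbS : ∀ z ∉ S, b z = 0)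
    (hF : ∀ x, ‖F x‖ ≤ b (zfloor h x)) (x : ι → ℝ) :
    ‖F x‖ₑ ^ 2 ≤ ∑ z ∈ S, (cell h z).indicator (fun _ => ENNReal.ofReal (b z ^ 2)) x := by
  rw [sum_eq_single (zfloor h x)
    (fun z _ hz => Set.indicator_of_notMem
      (fun hx => hz ((mem_cell_iff_zfloor_eq hh).1 hx).symm) _)
    (fun hS => by simp [hbS _ hS]),
    Set.indicator_of_mem (mem_cell_zfloor hh x), ← ofReal_norm,
    ← ENNReal.ofReal_pow (norm_nonneg _)]
  exact ENNReal.ofReal_le_ofReal (pow_le_pow_left₀ (norm_nonneg _) (hF x) 2)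

lemma eLpNorm_le_of_norm_le_zfloor [Fintype ι] (hh : 0 < h) (hbS : ∀ z ∉ S, b z = 0)
    (hF : ∀ x, ‖F x‖ ≤ b (zfloor h x)) {c : ℝ} (hc : 0 ≤ c)
    (hbc : h ^ Fintype.card ι * ∑ z ∈ S, b z ^ 2 ≤ c ^ 2) :
    eLpNorm F 2 volume ≤ ENNReal.ofReal c := by
  refine eLpNorm_two_le_of_lintegral_le ?_
  calc ∫⁻ x, ‖F x‖ₑ ^ 2
      ≤ ∫⁻ x, ∑ z ∈ S, (cell h z).indicator (fun _ => ENNReal.ofReal (b z ^ 2)) x :=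
        lintegral_mono (enorm_sq_le_sum_indicator_cell hh hbS hF)
    _ = ∑ z ∈ S, ENNReal.ofReal (b z ^ 2) * ENNReal.ofReal (h ^ Fintype.card ι) := by
        rw [lintegral_finsetSum _ fun z _ => measurable_const.indicator measurableSet_cell]
        simp [lintegral_indicator_const measurableSet_cell, volume_cell hh]
    _ = ENNReal.ofReal (h ^ Fintype.card ι * ∑ z ∈ S, b z ^ 2) := by
        rw [mul_sum, ENNReal.ofReal_sum_of_nonneg fun _ _ => by positivity]
        exact sum_congr rfl fun z _ => by rw [← ENNReal.ofReal_mul (sq_nonneg _), mul_comm]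
    _ ≤ ENNReal.ofReal c ^ 2 := by
        rw [← ENNReal.ofReal_pow hc]
        exact ENNReal.ofReal_le_ofReal hbc

end CellwiseBound

def corners : Finset Pt := Fintype.piFinset fun _ => {0, 1}

lemma mem_corners {ε : Pt} : ε ∈ corners ↔ ∀ k, ε k = 0 ∨ ε k = 1 := by
  simp [corners]

lemma zero_mem_corners : (0 : Pt) ∈ corners := mem_corners.2 fun _ => Or.inl rfl

lemma card_corners : corners.card = 8 := by
  simp [corners]

section Tensor

variable {F : Fin 3 → ℝ → ℝ} {c : Fin 3 → ℝ} {h M : ℝ} {y z : Pt} {x : Fin 3 → ℝ}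

def tensorBump (F : Fin 3 → ℝ → ℝ) (h : ℝ) (y : Pt) (x : Fin 3 → ℝ) : ℝ :=
  ∏ k, bump (F k) (x k / h - y k)

lemma tensorBump_eq_zero (hF : ∀ k, IsStep (F k) (c k)) (hx : zfloor h x = z)
    (hy : y - z ∉ corners) : tensorBump F h y x = 0 := by
  obtain ⟨k, hk0, hk1⟩ : ∃ k, y k - z k ≠ 0 ∧ y k - z k ≠ 1 := by
    simpa [mem_corners, not_forall, not_or] using hy
  have ⟨ha0, ha1⟩ := hx ▸ div_sub_zfloor_mem_Ico (h := h) x k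
  refine prod_eq_zero (mem_univ k) ((hF k).bump_eq_zero ?_)
  rcases lt_or_gt_of_ne hk0 with hlt | hgt
  · have : (y k : ℝ) ≤ z k - 1 := by exact_mod_cast (by omega : y k ≤ z k - 1)
    right; linarith
  · have : (z k : ℝ) + 2 ≤ y k := by exact_mod_cast (by omega : z k + 2 ≤ y k)
    left; linarith

lemma sum_corners_tensorBump (hF : ∀ k, IsStep (F k) (c k)) (hx : zfloor h x = z) :
    ∑ ε ∈ corners, tensorBump F h (z + ε) x = ∏ k, c k := by
  have hshift : ∀ ε : Pt, tensorBump F h (z + ε) x =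
      ∏ k, bump (F k) ((x k / h - z k) - (ε k : ℤ)) := fun ε => by
    simp only [tensorBump, Pi.add_apply, Int.cast_add, sub_sub]
  rw [sum_congr rfl fun ε _ => hshift ε, corners,
    ← prod_univ_sum (fun _ => {0, 1}) fun k e => bump (F k) (x k / h - z k - (e : ℤ))]
  refine prod_congr rfl fun k _ => ?_
  have ⟨ha0, ha1⟩ := hx ▸ div_sub_zfloor_mem_Ico (h := h) x k
  rw [sum_pair zero_ne_one, Int.cast_zero, Int.cast_one, sub_zero]
  exact (hF k).bump_add_bump_sub_one ha0 ha1.le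

lemma abs_tensorBump_le (hM : ∀ k t, |F k t| ≤ M) : |tensorBump F h y x| ≤ (2 * M) ^ 3 := by
  rw [tensorBump, abs_prod, ← Fin.prod_const]
  exact prod_le_prod (fun _ _ => abs_nonneg _) fun k _ => abs_bump_le (hM k) _

lemma dist_lt_of_tensorBump_ne_zero (hh : 0 < h) (hF : ∀ k, IsStep (F k) (c k))
    (hne : tensorBump F h y x ≠ 0) : dist x (fun i => h * y i) < h := by
  refine (dist_pi_lt_iff hh).2 fun k => ?_
  have hk := (hF k).abs_lt_one_of_bump_ne_zero (prod_ne_zero_iff.1 hne k (mem_univ k))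
  have hscale : x k - h * y k = h * (x k / h - y k) := by field_simp
  rw [Real.dist_eq, hscale, abs_mul, abs_of_pos hh]
  exact mul_lt_of_lt_one_right hh hk

end Tensor

section Interp

variable {h : ℝ} {G : Finset Pt} {u : Pt → Fin 3 → ℝ} {F : Fin 3 → ℝ → ℝ} {y : Pt}
  {x : Fin 3 → ℝ}

lemma contDiff_tensorBump {n : WithTop ℕ∞} (hF : ∀ k, ContDiff ℝ n (F k)) :
    ContDiff ℝ n (tensorBump F h y) :=
  contDiff_prod fun k _ =>
    (contDiff_bump (hF k)).comp (((contDiff_apply ℝ ℝ k).div_const h).sub contDiff_const)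

lemma fderiv_tensorBump_apply_single (hF : ∀ k, Differentiable ℝ (F k)) (i : Fin 3) :
    fderiv ℝ (tensorBump F h y) x (Pi.single i 1) =
      h⁻¹ * tensorBump (Function.update F i (deriv (F i))) h y x := by
  have hfactor : ∀ k ∈ univ, HasFDerivAt (fun x : Fin 3 → ℝ => bump (F k) (x k / h - y k))
      (bump (deriv (F k)) (x k / h - y k) • h⁻¹ •
        ContinuousLinearMap.proj (R := ℝ) (φ := fun _ : Fin 3 => ℝ) k) x := fun k _ => by
    have hlin : HasFDerivAt (fun x : Fin 3 → ℝ => x k / h - y k)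
        (h⁻¹ • ContinuousLinearMap.proj (R := ℝ) (φ := fun _ : Fin 3 => ℝ) k) x := by
      simpa [div_eq_inv_mul] using ((h⁻¹ • ContinuousLinearMap.proj (R := ℝ)
        (φ := fun _ : Fin 3 => ℝ) k).hasFDerivAt (x := x)).sub_const (y k : ℝ)
    exact (hasDerivAt_bump (hF k) _).comp_hasFDerivAt x hlin
  have hupdate : tensorBump (Function.update F i (deriv (F i))) h y x =
      bump (deriv (F i)) (x i / h - y i) * ∏ k ∈ univ.erase i, bump (F k) (x k / h - y k) := by
    rw [tensorBump, ← mul_prod_erase univ _ (mem_univ i), Function.update_self]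
    exact congrArg _
      (prod_congr rfl fun k hk => by rw [Function.update_of_ne (ne_of_mem_erase hk)])
  rw [HasFDerivAt.fderiv (f := tensorBump F h y) (HasFDerivAt.finsetProd hfactor),
    _root_.sum_apply, sum_eq_single i (fun k _ hk => by simp [hk.symm]) (by simp), hupdate]
  simp only [_root_.smul_apply, ContinuousLinearMap.proj_apply, Pi.single_eq_same, smul_eq_mul]
  ring

def interp (h : ℝ) (G : Finset Pt) (u : Pt → Fin 3 → ℝ) (x : Fin 3 → ℝ) : Fin 3 → ℝ :=
  ∑ y ∈ G, tensorBump (fun _ => smoothTransition) h y x • u y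

lemma contDiff_interp : ContDiff ℝ 1 (interp h G u) :=
  ContDiff.sum fun _ _ =>
    (contDiff_tensorBump fun _ => smoothTransition.contDiff).smul contDiff_const

lemma fderiv_interp_apply_single (i : Fin 3) :
    fderiv ℝ (interp h G u) x (Pi.single i 1) = ∑ y ∈ G,
      (h⁻¹ * tensorBump (Function.update (fun _ => smoothTransition) i
        (deriv smoothTransition)) h y x) • u y := by
  have hdiff : ∀ y, Differentiable ℝ (tensorBump (fun _ => smoothTransition) h y) := fun _ =>
    (contDiff_tensorBump fun _ => smoothTransition.contDiff).differentiable one_ne_zero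
  rw [HasFDerivAt.fderiv (f := interp h G u)
    (HasFDerivAt.fun_sum fun y _ => (hdiff y x).hasFDerivAt.smul_const (u y))]
  simp only [_root_.sum_apply, ContinuousLinearMap.smulRight_apply,
    fderiv_tensorBump_apply_single fun _ => differentiable_smoothTransition]

lemma support_interp_subset (hh : 0 < h) :
    Function.support (interp h G u) ⊆ ⋃ y ∈ G, Metric.ball (fun i => h * y i) h := by
  intro x hx
  obtain ⟨y, hy, hne⟩ := exists_ne_zero_of_sum_ne_zero hx
  exact Set.mem_biUnion hy (dist_lt_of_tensorBump_ne_zero hh (fun _ => isStep_smoothTransition)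
    (left_ne_zero_of_smul hne))

lemma tsupport_interp_subset (hh : 0 < h) :
    tsupport (interp h G u) ⊆ ⋃ y ∈ G, Metric.closedBall (fun i => h * y i) h :=
  closure_minimal
    ((support_interp_subset hh).trans (Set.iUnion₂_mono fun _ _ => Metric.ball_subset_closedBall))
    (isClosed_biUnion_finset fun _ _ => Metric.isClosed_closedBall)

lemma hasCompactSupport_interp (hh : 0 < h) : HasCompactSupport (interp h G u) :=
  (G.isCompact_biUnion fun _ _ => isCompact_closedBall _ _).of_isClosed_subset
    (isClosed_tsupport _) (tsupport_interp_subset hh)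

end Interp

lemma sq_norm_le_sum_sq {ι : Type*} [Fintype ι] (v : ι → ℝ) : ‖v‖ ^ 2 ≤ ∑ i, v i ^ 2 := by
  refine (Real.le_sqrt (norm_nonneg v) (sum_nonneg fun i _ => sq_nonneg (v i))).1
    ((pi_norm_le_iff_of_nonneg (Real.sqrt_nonneg _)).2 fun i => ?_)
  rw [Real.norm_eq_abs]
  exact Real.abs_le_sqrt (single_le_sum (fun j _ => sq_nonneg (v j)) (mem_univ i))

section Discrete

variable {G : Finset Pt} {u : Pt → Fin 3 → ℝ} {η z ε y : Pt} {h : ℝ}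

def cornerVariation (u : Pt → Fin 3 → ℝ) (z : Pt) : ℝ :=
  ∑ η ∈ corners, ∑ j, ‖Δ_[ee j] u (z + η)‖

def gradEnergy (u : Pt → Fin 3 → ℝ) (y : Pt) : ℝ :=
  ∑ j, ∑ i, (Δ_[ee j] u y i) ^ 2

lemma cornerVariation_nonneg : 0 ≤ cornerVariation u z :=
  sum_nonneg fun _ _ => sum_nonneg fun _ _ => norm_nonneg _

lemma norm_fwdDiff_le_cornerVariation (hη : η ∈ corners) (j : Fin 3) :
    ‖Δ_[ee j] u (z + η)‖ ≤ cornerVariation u z :=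
  (single_le_sum (f := fun j => ‖Δ_[ee j] u (z + η)‖) (fun _ _ => norm_nonneg _)
    (mem_univ j)).trans
    (single_le_sum (f := fun η => ∑ j, ‖Δ_[ee j] u (z + η)‖)
      (fun _ _ => sum_nonneg fun _ _ => norm_nonneg _) hη)

lemma norm_step_le_cornerVariation (hη : η ∈ corners) {t : ℤ} (ht : t = 0 ∨ t = 1)
    (j : Fin 3) : ‖u (z + (η + t • ee j)) - u (z + η)‖ ≤ cornerVariation u z := by
  rcases ht with rfl | rfl
  · simpa using cornerVariation_nonneg
  · simpa [fwdDiff, add_assoc] using norm_fwdDiff_le_cornerVariation (u := u) hη j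

/-- Walk from `z` to the corner `z + ε` one coordinate at a time. -/
lemma norm_sub_le_cornerVariation (hε : ε ∈ corners) :
    ‖u (z + ε) - u z‖ ≤ 3 * cornerVariation u z := by
  have hε' := mem_corners.1 hε
  set η₁ : Pt := 0 + ε 0 • ee 0
  set η₂ : Pt := η₁ + ε 1 • ee 1
  have hη₁ : η₁ ∈ corners := mem_corners.2 fun k => by fin_cases k <;> simp [η₁, ee, hε']
  have hη₂ : η₂ ∈ corners := mem_corners.2 fun k => by fin_cases k <;> simp [η₂, η₁, ee, hε']
  have hsplit : ε = η₂ + ε 2 • ee 2 := by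
    ext k; fin_cases k <;> simp [η₂, η₁, ee]
  have s₁ := norm_step_le_cornerVariation (u := u) (z := z) zero_mem_corners (hε' 0) 0
  have s₂ := norm_step_le_cornerVariation (u := u) (z := z) hη₁ (hε' 1) 1
  have s₃ := norm_step_le_cornerVariation (u := u) (z := z) hη₂ (hε' 2) 2
  rw [add_zero] at s₁
  rw [← hsplit] at s₃
  linarith [norm_sub_le_norm_sub_add_norm_sub (u (z + ε)) (u (z + η₂)) (u z),
    norm_sub_le_norm_sub_add_norm_sub (u (z + η₂)) (u (z + η₁)) (u z)]

lemma norm_sum_smul_sub_le {φ : Pt → ℝ} {m : ℝ} (hu : ∀ y ∉ G, u y = 0)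
    (hφ : ∀ y, y - z ∉ corners → φ y = 0) (hm : ∀ y, |φ y| ≤ m) :
    ‖∑ y ∈ G, φ y • u y - (∑ ε ∈ corners, φ (z + ε)) • u z‖ ≤ 24 * m * cornerVariation u z := by
  set T := corners.map (addLeftEmbedding z)
  have hT : ∀ y, y ∈ T ↔ y - z ∈ corners := fun y => by
    simp only [T, mem_map, addLeftEmbedding_apply]
    exact ⟨fun ⟨ε, hε, hy⟩ => by rwa [← hy, add_sub_cancel_left],
      fun h => ⟨_, h, add_sub_cancel z y⟩⟩
  have hlocal : ∑ y ∈ G, φ y • u y = ∑ ε ∈ corners, φ (z + ε) • u (z + ε) :=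
    calc ∑ y ∈ G, φ y • u y = ∑ y ∈ G ∩ T, φ y • u y := by
          refine (sum_subset inter_subset_left fun y hyG hyT => ?_).symm
          rw [hφ y fun h => hyT (mem_inter.2 ⟨hyG, (hT y).2 h⟩), zero_smul]
      _ = ∑ y ∈ T, φ y • u y := by
          refine sum_subset inter_subset_right fun y hyT hyG => ?_
          rw [hu y fun h => hyG (mem_inter.2 ⟨h, hyT⟩), smul_zero]
      _ = ∑ ε ∈ corners, φ (z + ε) • u (z + ε) := sum_map _ _ _
  rw [hlocal, sum_smul, ← sum_sub_distrib]
  calc ‖∑ ε ∈ corners, (φ (z + ε) • u (z + ε) - φ (z + ε) • u z)‖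
      ≤ ∑ _ε ∈ corners, m * (3 * cornerVariation u z) := by
        refine norm_sum_le_of_le _ fun ε hε => ?_
        rw [← smul_sub, norm_smul, Real.norm_eq_abs]
        exact mul_le_mul (hm _) (norm_sub_le_cornerVariation hε) (norm_nonneg _)
          ((abs_nonneg _).trans (hm z))
    _ = 24 * m * cornerVariation u z := by
        rw [sum_const, card_corners, nsmul_eq_mul]
        ring

lemma fwdDiff_eq_zero_of_notMem (hu : ∀ y ∉ G, u y = 0) (hub : ∀ y ∈ bdry G, u y = 0)
    (hy : y ∉ G) (j : Fin 3) : Δ_[ee j] u y = 0 := by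
  have hnext : u (y + ee j) = 0 := by
    by_cases hmem : y + ee j ∈ G
    · exact hub _ (mem_filter.2 ⟨hmem, j, Or.inr (by rwa [add_sub_cancel_right])⟩)
    · exact hu _ hmem
  rw [fwdDiff, hnext, hu y hy, sub_zero]

lemma gradEnergy_eq_zero_of_notMem (hu : ∀ y ∉ G, u y = 0) (hub : ∀ y ∈ bdry G, u y = 0)
    (hy : y ∉ G) : gradEnergy u y = 0 := by
  simp [gradEnergy, fwdDiff_eq_zero_of_notMem hu hub hy]

lemma cornerVariation_eq_zero (hu : ∀ y ∉ G, u y = 0) (hub : ∀ y ∈ bdry G, u y = 0)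
    (hz : z ∉ G - corners) : cornerVariation u z = 0 := by
  refine sum_eq_zero fun η hη => sum_eq_zero fun j _ => ?_
  have hzη : z + η ∉ G := fun h => hz (mem_sub.2 ⟨z + η, h, η, hη, add_sub_cancel_right z η⟩)
  rw [fwdDiff_eq_zero_of_notMem hu hub hzη, norm_zero]

lemma sq_cornerVariation_le :
    cornerVariation u z ^ 2 ≤ 24 * ∑ η ∈ corners, gradEnergy u (z + η) := by
  have hinner : ∀ η, (∑ j, ‖Δ_[ee j] u (z + η)‖) ^ 2 ≤ 3 * gradEnergy u (z + η) := fun η =>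
    calc (∑ j, ‖Δ_[ee j] u (z + η)‖) ^ 2 ≤ 3 * ∑ j, ‖Δ_[ee j] u (z + η)‖ ^ 2 := by
          simpa using sq_sum_le_card_mul_sum_sq (s := (univ : Finset (Fin 3)))
            (f := fun j => ‖Δ_[ee j] u (z + η)‖)
      _ ≤ 3 * gradEnergy u (z + η) := by
          unfold gradEnergy
          gcongr with j
          exact sq_norm_le_sum_sq (Δ_[ee j] u (z + η))
  calc cornerVariation u z ^ 2 ≤ 8 * ∑ η ∈ corners, (∑ j, ‖Δ_[ee j] u (z + η)‖) ^ 2 := by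
        simpa [cornerVariation, card_corners] using sq_sum_le_card_mul_sum_sq (s := corners)
          (f := fun η => ∑ j, ‖Δ_[ee j] u (z + η)‖)
    _ ≤ 8 * ∑ η ∈ corners, 3 * gradEnergy u (z + η) := by gcongr with η; exact hinner η
    _ = 24 * ∑ η ∈ corners, gradEnergy u (z + η) := by rw [← mul_sum]; ring

lemma sum_sq_DpNorm (hh : 0 < h) : ∑ j, DpNorm h G u j ^ 2 = h * ∑ y ∈ G, gradEnergy u y := by
  have hj : ∀ j, DpNorm h G u j ^ 2 = h * ∑ y ∈ G, ∑ i, (Δ_[ee j] u y i) ^ 2 := fun j => by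
    rw [DpNorm, Real.sq_sqrt (sum_nonneg fun _ _ => by positivity), mul_sum]
    refine sum_congr rfl fun y _ => ?_
    simp only [fwdDiff, Pi.sub_apply, div_pow, ← sum_div]
    field_simp
  simp only [hj, ← mul_sum, gradEnergy]
  rw [sum_comm]

lemma mul_sum_sq_cornerVariation_le (hh : 0 < h) (hu : ∀ y ∉ G, u y = 0)
    (hub : ∀ y ∈ bdry G, u y = 0) (S : Finset Pt) :
    h * ∑ z ∈ S, cornerVariation u z ^ 2 ≤ 192 * (∑ j, DpNorm h G u j) ^ 2 := by
  have hshift : ∀ η, ∑ z ∈ S, gradEnergy u (z + η) ≤ ∑ y ∈ G, gradEnergy u y := fun η => by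
    calc ∑ z ∈ S, gradEnergy u (z + η)
        = ∑ y ∈ S.map (addRightEmbedding η), gradEnergy u y :=
          (sum_map S (addRightEmbedding η) (gradEnergy u)).symm
      _ = ∑ y ∈ S.map (addRightEmbedding η) ∩ G, gradEnergy u y := by
          refine (sum_subset inter_subset_left fun y hyS hyG => ?_).symm
          exact gradEnergy_eq_zero_of_notMem hu hub fun h => hyG (mem_inter.2 ⟨hyS, h⟩)
      _ ≤ ∑ y ∈ G, gradEnergy u y :=
          sum_le_sum_of_subset_of_nonneg inter_subset_right fun _ _ _ => by
            unfold gradEnergy; positivity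
  have hsum : ∑ z ∈ S, cornerVariation u z ^ 2 ≤ 192 * ∑ y ∈ G, gradEnergy u y :=
    calc ∑ z ∈ S, cornerVariation u z ^ 2
        ≤ ∑ z ∈ S, 24 * ∑ η ∈ corners, gradEnergy u (z + η) :=
          sum_le_sum fun _ _ => sq_cornerVariation_le
      _ = 24 * ∑ η ∈ corners, ∑ z ∈ S, gradEnergy u (z + η) := by rw [← mul_sum, sum_comm]
      _ ≤ 24 * ∑ _η ∈ corners, ∑ y ∈ G, gradEnergy u y := by gcongr with η; exact hshift η
      _ = 192 * ∑ y ∈ G, gradEnergy u y := by rw [sum_const, card_corners, nsmul_eq_mul]; ring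
  have hDp : ∑ j, DpNorm h G u j ^ 2 ≤ (∑ j, DpNorm h G u j) ^ 2 :=
    sum_sq_le_sq_sum_of_nonneg fun _ _ => Real.sqrt_nonneg _
  rw [sum_sq_DpNorm hh] at hDp
  nlinarith

end Discrete

section Pointwise

variable {h M : ℝ} {G : Finset Pt} {u : Pt → Fin 3 → ℝ} {z : Pt} {x : Fin 3 → ℝ}

lemma norm_interp_sub_le (hu : ∀ y ∉ G, u y = 0) (hM : ∀ t, |smoothTransition t| ≤ M)
    (hx : zfloor h x = z) :
    ‖interp h G u x - u z‖ ≤ 24 * (2 * M) ^ 3 * cornerVariation u z := by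
  have hF : ∀ k : Fin 3, IsStep ((fun _ => smoothTransition) k) 1 :=
    fun _ => isStep_smoothTransition
  simpa [interp, sum_corners_tensorBump hF hx] using norm_sum_smul_sub_le hu
    (fun _ hy => tensorBump_eq_zero hF hx hy) (fun _ => abs_tensorBump_le fun _ => hM)

lemma norm_fderiv_interp_le (hh : 0 < h) (hu : ∀ y ∉ G, u y = 0)
    (hM : ∀ t, |smoothTransition t| ≤ M ∧ |deriv smoothTransition t| ≤ M)
    (hx : zfloor h x = z) (i : Fin 3) :
    ‖fderiv ℝ (interp h G u) x (Pi.single i 1)‖ ≤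
      24 * (h⁻¹ * (2 * M) ^ 3) * cornerVariation u z := by
  rw [fderiv_interp_apply_single]
  set F := Function.update (fun _ => smoothTransition) i (deriv smoothTransition)
  have hF : ∀ k, IsStep (F k) (Function.update (fun _ => (1 : ℝ)) i 0 k) := fun k => by
    rcases eq_or_ne k i with rfl | hk
    · simpa [F] using isStep_smoothTransition.deriv differentiable_smoothTransition
    · simpa [F, hk] using isStep_smoothTransition
  have hFM : ∀ k t, |F k t| ≤ M := fun k t => by
    rcases eq_or_ne k i with rfl | hk
    · simpa [F] using (hM t).2
    · simpa [F, hk] using (hM t).1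
  have hsum : ∑ ε ∈ corners, h⁻¹ * tensorBump F h (z + ε) x = 0 := by
    rw [← mul_sum, sum_corners_tensorBump hF hx, prod_eq_zero (mem_univ i) (by simp), mul_zero]
  have hbound := norm_sum_smul_sub_le hu (φ := fun y => h⁻¹ * tensorBump F h y x)
    (fun _ hy => by rw [tensorBump_eq_zero hF hx hy, mul_zero])
    (fun _ => by
      rw [abs_mul, abs_of_pos (inv_pos.2 hh)]
      exact mul_le_mul_of_nonneg_left (abs_tensorBump_le hFM) (inv_nonneg.2 hh.le))
  rwa [hsum, zero_smul, sub_zero] at hbound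

end Pointwise

section L2

variable {h M : ℝ} {G : Finset Pt} {u : Pt → Fin 3 → ℝ}

lemma eLpNorm_interp_sub_le (hh : 0 < h) (hu : ∀ y ∉ G, u y = 0) (hub : ∀ y ∈ bdry G, u y = 0)
    (hM : ∀ t, |smoothTransition t| ≤ M) :
    eLpNorm (fun x => interp h G u x - u (zfloor h x)) 2 volume ≤
      ENNReal.ofReal (336 * (2 * M) ^ 3 * h * ∑ j, DpNorm h G u j) := by
  have hM0 : 0 ≤ M := (abs_nonneg _).trans (hM 0)
  have hP : 0 ≤ ∑ j, DpNorm h G u j := sum_nonneg fun _ _ => Real.sqrt_nonneg _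
  have hB := mul_sum_sq_cornerVariation_le hh hu hub (G - corners)
  set A := 24 * (2 * M) ^ 3
  refine eLpNorm_le_of_norm_le_zfloor hh (b := fun z => A * cornerVariation u z)
    (fun z hz => by rw [cornerVariation_eq_zero hu hub hz, mul_zero])
    (fun x => norm_interp_sub_le hu hM rfl) (by positivity) ?_
  calc h ^ Fintype.card (Fin 3) * ∑ z ∈ G - corners, (A * cornerVariation u z) ^ 2
      = (A * h) ^ 2 * (h * ∑ z ∈ G - corners, cornerVariation u z ^ 2) := by
        simp only [Fintype.card_fin, mul_pow, ← mul_sum]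
        ring
    _ ≤ (A * h) ^ 2 * (192 * (∑ j, DpNorm h G u j) ^ 2) := by gcongr
    _ ≤ (336 * (2 * M) ^ 3 * h * ∑ j, DpNorm h G u j) ^ 2 := by
        nlinarith [sq_nonneg (A * h * ∑ j, DpNorm h G u j)]

lemma eLpNorm_fderiv_interp_le (hh : 0 < h) (hu : ∀ y ∉ G, u y = 0)
    (hub : ∀ y ∈ bdry G, u y = 0)
    (hM : ∀ t, |smoothTransition t| ≤ M ∧ |deriv smoothTransition t| ≤ M) (i : Fin 3) :
    eLpNorm (fun x => fderiv ℝ (interp h G u) x (Pi.single i 1)) 2 volume ≤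
      ENNReal.ofReal (336 * (2 * M) ^ 3 * ∑ j, DpNorm h G u j) := by
  have hM0 : 0 ≤ M := (abs_nonneg _).trans (hM 0).1
  have hP : 0 ≤ ∑ j, DpNorm h G u j := sum_nonneg fun _ _ => Real.sqrt_nonneg _
  have hB := mul_sum_sq_cornerVariation_le hh hu hub (G - corners)
  set A := 24 * (2 * M) ^ 3
  refine eLpNorm_le_of_norm_le_zfloor hh
    (b := fun z => 24 * (h⁻¹ * (2 * M) ^ 3) * cornerVariation u z)
    (fun z hz => by rw [cornerVariation_eq_zero hu hub hz, mul_zero])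
    (fun x => norm_fderiv_interp_le hh hu hM rfl i) (by positivity) ?_
  calc h ^ Fintype.card (Fin 3) *
        ∑ z ∈ G - corners, (24 * (h⁻¹ * (2 * M) ^ 3) * cornerVariation u z) ^ 2
      = A ^ 2 * (h * ∑ z ∈ G - corners, cornerVariation u z ^ 2) := by
        simp only [Fintype.card_fin, mul_pow, ← mul_sum]
        field_simp
        ring
    _ ≤ A ^ 2 * (192 * (∑ j, DpNorm h G u j) ^ 2) := by gcongr
    _ ≤ (336 * (2 * M) ^ 3 * ∑ j, DpNorm h G u j) ^ 2 := by
        nlinarith [sq_nonneg (A * ∑ j, DpNorm h G u j)]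

end L2

end

end LipschitzInterpolation

open LipschitzInterpolation in
theorem lipschitz_interpolation_general (Ω : Set (Fin 3 → ℝ)) :
    ∃ K > (0 : ℝ), ∀ h : ℝ, 0 < h → ∀ Ωh : Finset Pt,
      (∀ z : Pt, z ∈ Ωh ↔ ((fun i => h * z i) ∈ Ω ∧
        {x : Fin 3 → ℝ | ∀ i, |x i - h * z i| ≤ 2 * h} ⊆ Ω)) →
      ∀ u : Pt → Fin 3 → ℝ, (∀ z ∉ Ωh, u z = 0) → (∀ z ∈ bdry Ωh, u z = 0) →
      ∀ v : (Fin 3 → ℝ) → Fin 3 → ℝ,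
        (∀ z ∈ Ωh, ∀ x : Fin 3 → ℝ,
          (∀ i, h * z i ≤ x i ∧ x i < h * z i + h) → v x = u z) →
        (∀ x : Fin 3 → ℝ,
          (¬ ∃ z ∈ Ωh, ∀ i, h * z i ≤ x i ∧ x i < h * z i + h) → v x = 0) →
      ∃ (w : (Fin 3 → ℝ) → Fin 3 → ℝ) (C : ℝ≥0),
        LipschitzWith C w ∧ HasCompactSupport w ∧ tsupport w ⊆ Ω ∧
        eLpNorm (fun x => w x - v x) 2 (volume.restrict Ω)
          ≤ ENNReal.ofReal (K * h * ∑ j, DpNorm h Ωh u j) ∧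
        ∀ i : Fin 3,
          eLpNorm (fun x => fderiv ℝ w x (Pi.single i 1)) 2 (volume.restrict Ω)
            ≤ ENNReal.ofReal (K * ∑ j, DpNorm h Ωh u j) := by
  obtain ⟨M, hM0, hM⟩ := exists_bound_smoothTransition
  refine ⟨336 * (2 * M) ^ 3, by positivity, fun h hh Ωh hΩh u hu hub v hv hv0 => ?_⟩
  have hv_eq : v = fun x => u (zfloor h x) := funext fun x => by
    by_cases hz : zfloor h x ∈ Ωh
    · exact hv _ hz x (mem_cell_zfloor hh x)
    · rw [hu _ hz]
      exact hv0 x fun ⟨z, hzΩ, hxz⟩ => hz ((mem_cell_iff_zfloor_eq hh).1 hxz ▸ hzΩ)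
  obtain ⟨C, hC⟩ := contDiff_interp.lipschitzWith_of_hasCompactSupport
    (hasCompactSupport_interp hh) one_ne_zero
  refine ⟨interp h Ωh u, C, hC, hasCompactSupport_interp hh, ?_, ?_, fun i => ?_⟩
  · refine (tsupport_interp_subset hh).trans
      (Set.iUnion₂_subset fun y hy x hx => ((hΩh y).1 hy).2 fun i => ?_)
    have hxi := (dist_le_pi_dist x _ i).trans (Metric.mem_closedBall.1 hx)
    rw [Real.dist_eq] at hxi
    linarith
  · rw [hv_eq]
    exact (eLpNorm_mono_measure _ Measure.restrict_le_self).trans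
      (eLpNorm_interp_sub_le hh hu hub fun t => (hM t).1)
  · exact (eLpNorm_mono_measure _ Measure.restrict_le_self).trans
      (eLpNorm_fderiv_interp_le hh hu hub hM i)

/-- **Lipschitz interpolation of step functions** (Lemma 2.4): for `u : Ω_h → ℝ³`
vanishing on `∂Ω_h` and the associated piecewise-constant step function `v`, there
is a compactly supported Lipschitz `w` on `Ω` with
`‖w - v‖_{L²(Ω)} ≤ K h ∑_j ‖D_j⁺u‖_{Ω_h}` and
`‖∂_{x_i} w‖_{L²(Ω)} ≤ K ∑_j ‖D_j⁺u‖_{Ω_h}`, `K` independent of `u` and `h`. -/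
theorem lipschitz_interpolation (Ω : Set (Fin 3 → ℝ))
    (hΩo : IsOpen Ω) (hΩb : Bornology.IsBounded Ω) (hΩc : IsConnected Ω) :
    ∃ K > (0 : ℝ), ∀ h : ℝ, 0 < h → ∀ Ωh : Finset Pt,
      (∀ z : Pt, z ∈ Ωh ↔ ((fun i => h * z i) ∈ Ω ∧
        {x : Fin 3 → ℝ | ∀ i, |x i - h * z i| ≤ 2 * h} ⊆ Ω)) →
      ∀ u : Pt → Fin 3 → ℝ, (∀ z ∉ Ωh, u z = 0) → (∀ z ∈ bdry Ωh, u z = 0) →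
      ∀ v : (Fin 3 → ℝ) → Fin 3 → ℝ,
        (∀ z ∈ Ωh, ∀ x : Fin 3 → ℝ,
          (∀ i, h * z i ≤ x i ∧ x i < h * z i + h) → v x = u z) →
        (∀ x : Fin 3 → ℝ,
          (¬ ∃ z ∈ Ωh, ∀ i, h * z i ≤ x i ∧ x i < h * z i + h) → v x = 0) →
      ∃ (w : (Fin 3 → ℝ) → Fin 3 → ℝ) (C : ℝ≥0),
        LipschitzWith C w ∧ HasCompactSupport w ∧ tsupport w ⊆ Ω ∧
        eLpNorm (fun x => w x - v x) 2 (volume.restrict Ω)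
          ≤ ENNReal.ofReal (K * h * ∑ j, DpNorm h Ωh u j) ∧
        ∀ i : Fin 3,
          eLpNorm (fun x => fderiv ℝ w x (Pi.single i 1)) 2 (volume.restrict Ω)
            ≤ ENNReal.ofReal (K * ∑ j, DpNorm h Ωh u j) :=
  lipschitz_interpolation_general Ω
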